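/- Under the dynamic-threshold differential equations dα_j/dt = -λ(t)(φ(α_j(t)) - φ(α_{j-1}(t))) with φ(α_0) = 0, α_j(T) = 0, and λ(t) ≥ 0, φ nonincreasing and nonnegative: if α_1, …, α_n is a solution then α_j(t) ≥ α_{j+1}(t) for all t ∈ [0,T] and all j. -/

import Mathlib

/-!
Write `a_j' = -λ (φ(a_j) - φ(a_{j-1}))`. Whenever `φ(a_{j-1}) ≤ φ(a_j)` the curve `a_j` is
nonincreasing, while on the set where `a_{j+1} > a_j` the curve `a_{j+1}` is nondecreasing since
`φ` is antitone. As both end at `0` at time `T`, the curve `a_{j+1}` can never rise above `a_j`.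
Then `φ(a_j) ≤ φ(a_{j+1})`, which is the hypothesis for the next index, and induction on `j`
starting from `φ(a_0) = 0 ≤ φ(a_1)` finishes the proof.
-/

open Set

theorem nonpos_on_Icc_of_hasDerivAt_nonneg_of_pos {h h' : ℝ → ℝ} {a b : ℝ}
    (hcont : ContinuousOn h (Icc a b)) (hderiv : ∀ t ∈ Ioo a b, HasDerivAt h (h' t) t)
    (hgrow : ∀ t ∈ Ioo a b, 0 < h t → 0 ≤ h' t) (hb : h b ≤ 0) :
    ∀ t ∈ Icc a b, h t ≤ 0 := by
  intro t₀ ht₀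
  by_contra! hpos
  -- `c` is the first time after `t₀` at which `h` drops to `0`; `h` increases on `[t₀, c]`.
  set S := Icc t₀ b ∩ h ⁻¹' Iic 0
  have hS_closed : IsClosed S :=
    (hcont.mono (Icc_subset_Icc_left ht₀.1)).preimage_isClosed_of_isClosed isClosed_Icc
      isClosed_Iic
  have hbdd : BddBelow S := ⟨t₀, fun t ht => ht.1.1⟩
  have hcS : sInf S ∈ S := hS_closed.csInf_mem ⟨b, ⟨ht₀.2, le_rfl⟩, hb⟩ hbdd
  set c := sInf S
  have hc : t₀ < c := lt_of_le_of_ne hcS.1.1 fun he => hpos.not_ge (he ▸ hcS.2)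
  have hpos_before : ∀ t ∈ Ioo t₀ c, 0 < h t := fun t ht => by
    by_contra! hle
    exact notMem_of_lt_csInf ht.2 hbdd ⟨⟨ht.1.le, ht.2.le.trans hcS.1.2⟩, hle⟩
  have hsub : Ioo t₀ c ⊆ Ioo a b := Ioo_subset_Ioo ht₀.1 hcS.1.2
  have hmono : MonotoneOn h (Icc t₀ c) := by
    refine monotoneOn_of_hasDerivWithinAt_nonneg (f' := h') (convex_Icc t₀ c)
      (hcont.mono (Icc_subset_Icc ht₀.1 hcS.1.2)) (fun t ht => ?_) (fun t ht => ?_)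
    all_goals rw [interior_Icc] at ht
    · exact (hderiv t (hsub ht)).hasDerivWithinAt
    · exact hgrow t (hsub ht) (hpos_before t ht)
  exact hpos.not_ge
    ((hmono (left_mem_Icc.2 hc.le) (right_mem_Icc.2 hc.le) hc.le).trans hcS.2)

theorem le_on_Icc_of_hasDerivAt_neg_mul_sub {lam φ p u v : ℝ → ℝ} {a b : ℝ}
    (hlam : ∀ t, 0 ≤ lam t) (hφ : Antitone φ)
    (hv : ∀ t ∈ Icc a b, HasDerivAt v (-lam t * (φ (v t) - p t)) t)
    (hu : ∀ t ∈ Icc a b, HasDerivAt u (-lam t * (φ (u t) - φ (v t))) t)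
    (hp : ∀ t ∈ Icc a b, p t ≤ φ (v t)) (hb : u b ≤ v b) :
    ∀ t ∈ Icc a b, u t ≤ v t := by
  have hdiff : ∀ t ∈ Icc a b, HasDerivAt (u - v)
      (-lam t * (φ (u t) - φ (v t)) - -lam t * (φ (v t) - p t)) t :=
    fun t ht => (hu t ht).sub (hv t ht)
  refine fun t ht => sub_nonpos.1 <| nonpos_on_Icc_of_hasDerivAt_nonneg_of_pos
    (fun t ht => (hdiff t ht).continuousAt.continuousWithinAt)
    (fun t ht => hdiff t (Ioo_subset_Icc_self ht)) (fun t ht hlt => ?_) (sub_nonpos.2 hb) t ht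
  have hv_nonincr := mul_nonneg (hlam t) (sub_nonneg.2 (hp t (Ioo_subset_Icc_self ht)))
  have hu_nondecr := mul_nonneg (hlam t) (sub_nonneg.2 (hφ (sub_pos.1 hlt).le))
  linarith

theorem critical_curves_ordered_general
    (T : ℝ)
    (lam : ℝ → ℝ) (hlam_nonneg : ∀ t, 0 ≤ lam t)
    (φ : ℝ → ℝ) (hφ_anti : Antitone φ) (hφ_nonneg : ∀ x, 0 ≤ φ x)
    (n : ℕ)
    (a : ℕ → ℝ → ℝ)
    (Φ : ℕ → ℝ → ℝ)
    (hΦ : ∀ j t, Φ j t = if j = 0 then 0 else φ (a j t))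
    (hode : ∀ j, 1 ≤ j → j ≤ n → ∀ t ∈ Set.Icc (0:ℝ) T,
      HasDerivAt (a j) (-(lam t) * (Φ j t - Φ (j - 1) t)) t)
    (hterm : ∀ j, 1 ≤ j → j ≤ n → a j T = 0) :
    ∀ j, 1 ≤ j → j < n → ∀ t ∈ Set.Icc (0:ℝ) T, a (j + 1) t ≤ a j t := by
  have hΦ_pos : ∀ j, 1 ≤ j → ∀ t, Φ j t = φ (a j t) := fun j hj t => by
    rw [hΦ, if_neg (by omega)]
  have hstep : ∀ j, 1 ≤ j → j < n → (∀ t ∈ Icc 0 T, Φ (j - 1) t ≤ φ (a j t)) →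
      ∀ t ∈ Icc 0 T, a (j + 1) t ≤ a j t := by
    intro j hj hjn hp
    refine le_on_Icc_of_hasDerivAt_neg_mul_sub hlam_nonneg hφ_anti (fun t ht => ?_)
      (fun t ht => ?_) hp (by rw [hterm j hj hjn.le, hterm (j + 1) (by omega) hjn])
    · simpa only [hΦ_pos j hj] using hode j hj hjn.le t ht
    · simpa only [hΦ_pos (j + 1) (by omega), Nat.add_sub_cancel, hΦ_pos j hj]
        using hode (j + 1) (by omega) hjn t ht
  intro j hj
  induction j, hj using Nat.le_induction with
  | base => exact fun h1n => hstep 1 le_rfl h1n fun t _ => by simp [hΦ, hφ_nonneg]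
  | succ j hj ih =>
    refine fun hjn => hstep (j + 1) (by omega) hjn fun t ht => ?_
    simpa only [Nat.add_sub_cancel, hΦ_pos j hj] using hφ_anti (ih (by omega) t ht)

/-- Ordering of the optimal critical curves: for the dynamic-threshold system
`dα_j/dt = -λ(t)(φ(α_j(t)) - φ(α_{j-1}(t)))` with the convention `φ(α_0) ≡ 0`,
terminal conditions `α_j(T) = 0`, `λ ≥ 0` continuous, and `φ` continuous, nonincreasing
and nonnegative, the solutions satisfy `α_{j+1}(t) ≤ α_j(t)` on `[0,T]`. -/
theorem critical_curves_ordered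
    (T : ℝ) (hT : 0 < T)
    (lam : ℝ → ℝ) (hlam_cont : Continuous lam) (hlam_nonneg : ∀ t, 0 ≤ lam t)
    (φ : ℝ → ℝ) (hφ_cont : Continuous φ) (hφ_anti : Antitone φ) (hφ_nonneg : ∀ x, 0 ≤ φ x)
    (n : ℕ) (hn : 1 ≤ n)
    (a : ℕ → ℝ → ℝ)
    (Φ : ℕ → ℝ → ℝ)
    (hΦ : ∀ j t, Φ j t = if j = 0 then 0 else φ (a j t))
    (hode : ∀ j, 1 ≤ j → j ≤ n → ∀ t ∈ Set.Icc (0:ℝ) T,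
      HasDerivAt (a j) (-(lam t) * (Φ j t - Φ (j - 1) t)) t)
    (hterm : ∀ j, 1 ≤ j → j ≤ n → a j T = 0) :
    ∀ j, 1 ≤ j → j < n → ∀ t ∈ Set.Icc (0:ℝ) T, a (j + 1) t ≤ a j t :=
  critical_curves_ordered_general T lam hlam_nonneg φ hφ_anti hφ_nonneg n a Φ hΦ hode hterm
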